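/- Let Σ be a finite nonempty type, let f : ℝ → ℝ be a convex function, and let f*(x) = sup_{t∈ℝ} (t·x − f(t)) denote its convex conjugate. Let p and q be probability mass functions on Σ with q(σ) > 0 for every σ, and define the f-divergence D_f(p,q) = Σ_σ q(σ)·f(p(σ)/q(σ)). Then: (i) for every function u : Σ → ℝ such that f*(u(σ)) is finite for every σ, one has D_f(p,q) ≥ Σ_σ u(σ)·p(σ) − Σ_σ f*(u(σ))·q(σ); and (ii) equality holds if and only if for every σ ∈ Σ the number u(σ) is a subgradient of f at p(σ)/q(σ). -/

import Mathlib

/-!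
Termwise Fenchel–Young: `u σ · p σ ≤ q σ · f (p σ / q σ) + q σ · f*(u σ)`, with equality exactly when
`u σ` is a subgradient of `f` at `p σ / q σ`. Summing gives the bound, and a sum of termwise
inequalities is an equality iff every term is.
-/

/-- The convex conjugate `f*(x) = sup_t (t·x − f(t))`, as a real-valued supremum. -/
noncomputable def fconj (f : ℝ → ℝ) (x : ℝ) : ℝ := sSup (Set.range fun t => t * x - f t)

/-- `c` is a subgradient of `f` at `t`: `f(s) ≥ f(t) + c·(s − t)` for all `s`. -/
def IsSubgradientAt (f : ℝ → ℝ) (t c : ℝ) : Prop := ∀ s : ℝ, f t + c * (s - t) ≤ f s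

section FenchelYoung

variable {f : ℝ → ℝ} {x : ℝ}

lemma le_fconj (h : BddAbove (Set.range fun t => t * x - f t)) (t : ℝ) :
    t * x - f t ≤ fconj f x :=
  le_csSup h ⟨t, rfl⟩

lemma fconj_eq_iff_isSubgradientAt (h : BddAbove (Set.range fun t => t * x - f t)) {t : ℝ} :
    fconj f x = t * x - f t ↔ IsSubgradientAt f t x := by
  refine ⟨fun he s => by linarith [le_fconj h s], fun hs => ?_⟩
  refine le_antisymm (csSup_le (Set.range_nonempty _) ?_) (le_fconj h t)
  rintro _ ⟨s, rfl⟩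
  linarith [hs s]

lemma perspective_fenchel_young_gap {p q : ℝ} (hq : q ≠ 0) :
    q * f (p / q) - (x * p - fconj f x * q) = q * (fconj f x - (p / q * x - f (p / q))) := by
  field_simp
  ring

lemma mul_sub_fconj_mul_le (h : BddAbove (Set.range fun t => t * x - f t)) {p q : ℝ} (hq : 0 < q) :
    x * p - fconj f x * q ≤ q * f (p / q) := by
  have := mul_nonneg hq.le (sub_nonneg.2 (le_fconj h (p / q)))
  linarith [perspective_fenchel_young_gap (f := f) (x := x) (p := p) hq.ne']

lemma mul_sub_fconj_mul_eq_iff (h : BddAbove (Set.range fun t => t * x - f t)) {p q : ℝ}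
    (hq : 0 < q) :
    x * p - fconj f x * q = q * f (p / q) ↔ IsSubgradientAt f (p / q) x := by
  rw [← fconj_eq_iff_isSubgradientAt h, eq_comm, ← sub_eq_zero,
    perspective_fenchel_young_gap hq.ne', mul_eq_zero, sub_eq_zero]
  simp [hq.ne']

end FenchelYoung

theorem stmt_0_general {S : Type*} [Fintype S]
    (f : ℝ → ℝ)
    (p q : S → ℝ)
    (hq0 : ∀ σ, 0 < q σ)
    (u : S → ℝ)
    (hu : ∀ σ, BddAbove (Set.range fun t => t * u σ - f t)) :
    (∑ σ, q σ * f (p σ / q σ)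
        ≥ ∑ σ, u σ * p σ - ∑ σ, fconj f (u σ) * q σ)
    ∧ ((∑ σ, q σ * f (p σ / q σ)
        = ∑ σ, u σ * p σ - ∑ σ, fconj f (u σ) * q σ)
      ↔ ∀ σ, IsSubgradientAt f (p σ / q σ) (u σ)) := by
  have termwise σ (_ : σ ∈ Finset.univ) := mul_sub_fconj_mul_le (hu σ) (p := p σ) (hq0 σ)
  rw [← Finset.sum_sub_distrib, ge_iff_le, eq_comm, Finset.sum_eq_sum_iff_of_le termwise]
  exact ⟨Finset.sum_le_sum termwise,
    by simp only [Finset.mem_univ, true_imp_iff, mul_sub_fconj_mul_eq_iff (hu _) (hq0 _)]⟩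

/-- Dual representation of the f-divergence `D_f(p,q) = Σ_σ q(σ)·f(p(σ)/q(σ))`:
(i) for every `u : S → ℝ` with `f*(u σ)` finite for every `σ`,
`D_f(p,q) ≥ Σ_σ u(σ)·p(σ) − Σ_σ f*(u(σ))·q(σ)`, and
(ii) equality holds iff for every `σ`, `u σ` is a subgradient of `f` at `p σ / q σ`. -/
theorem stmt_0 {S : Type*} [Fintype S] [Nonempty S]
    (f : ℝ → ℝ) (hf : ConvexOn ℝ Set.univ f)
    (p q : S → ℝ)
    (hp0 : ∀ σ, 0 ≤ p σ) (hp1 : ∑ σ, p σ = 1)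
    (hq0 : ∀ σ, 0 < q σ) (hq1 : ∑ σ, q σ = 1)
    (u : S → ℝ)
    (hu : ∀ σ, BddAbove (Set.range fun t => t * u σ - f t)) :
    (∑ σ, q σ * f (p σ / q σ)
        ≥ ∑ σ, u σ * p σ - ∑ σ, fconj f (u σ) * q σ)
    ∧ ((∑ σ, q σ * f (p σ / q σ)
        = ∑ σ, u σ * p σ - ∑ σ, fconj f (u σ) * q σ)
      ↔ ∀ σ, IsSubgradientAt f (p σ / q σ) (u σ)) :=
  stmt_0_general f p q hq0 u hu
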